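/- arXiv:1505.05682 — 3 statements merged into one kernel-verified Lean document; each statement's English description precedes it below -/
import Mathlib

section
/- Let d ∈ ℕ with d ≥ 2, let G be a locally compact group, and suppose f ∈ 𝒫(S^{d+2},G) (so that also f ∈ 𝒫(S^d,G)). Let φ_{n,d} and φ_{n,d+2} denote the d- and (d+2)-Schoenberg functions of f, given by φ_{n,D}(u) := (N_n(D) σ_{D-1} / σ_D) ∫_{-1}^1 f(x,u) c_n(D,x) (1-x²)^{D/2-1} dx for D ∈ {d, d+2}. Then for all n ≥ 0 and all u ∈ G: φ_{n,d+2}(u) = ((n+d-1)(n+d)/(d(2n+d-1))) φ_{n,d}(u) - ((n+1)(n+2)/(d(2n+d+3))) φ_{n+2,d}(u). -/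
open scoped RealInnerProductSpace BigOperators ComplexOrder
open Polynomial MeasureTheory Filter

/-- Gegenbauer polynomial `C_n^{(λ)}(x)` via its explicit formula. -/
noncomputable def gegenbauerC (lam : ℝ) (n : ℕ) (x : ℝ) : ℝ :=
  ∑ k ∈ Finset.range (n / 2 + 1),
    (-1 : ℝ) ^ k * ((ascPochhammer ℝ (n - k)).eval lam /
      ((Nat.factorial k : ℝ) * (Nat.factorial (n - 2 * k) : ℝ))) * (2 * x) ^ (n - 2 * k)

/-- Chebyshev polynomial of the first kind, evaluated at a real number. -/
noncomputable def chebyshevT (n : ℕ) (x : ℝ) : ℝ := (Polynomial.Chebyshev.T ℝ (n : ℤ)).eval x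

/-- Normalized ultraspherical polynomials `c_n(d,x)`: for `d ≥ 2` the Gegenbauer polynomial
with parameter `λ = (d-1)/2` normalized to be `1` at `x = 1`; for `d = 1` the Chebyshev
polynomial `T_n`. -/
noncomputable def ultraC (d n : ℕ) (x : ℝ) : ℝ :=
  if d = 1 then chebyshevT n x
  else gegenbauerC (((d : ℝ) - 1) / 2) n x / gegenbauerC (((d : ℝ) - 1) / 2) n 1

/-- Dimension `N_n(d)` of the space of spherical harmonics of degree `n` on `S^d`. -/
noncomputable def NNdim (n d : ℕ) : ℝ :=
  if n = 0 then 1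
  else (ascPochhammer ℝ (n - 1)).eval (d : ℝ) * (2 * n + d - 1) / Nat.factorial n

/-- Total surface measure `σ_d = 2 π^((d+1)/2) / Γ((d+1)/2)` of the sphere `S^d`
(for `d = 0` this gives the value `2`). -/
noncomputable def sigmaS (d : ℕ) : ℝ :=
  2 * Real.pi ^ (((d : ℝ) + 1) / 2) / Real.Gamma (((d : ℝ) + 1) / 2)

/-- The class `𝒫(G)` of continuous positive definite functions on a topological group `G`. -/
def IsPosDefOnGroup {G : Type*} [Group G] [TopologicalSpace G] (φ : G → ℂ) : Prop :=
  Continuous φ ∧ ∀ (n : ℕ) (u : Fin n → G) (a : Fin n → ℂ),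
    0 ≤ ∑ k, ∑ l, φ ((u k)⁻¹ * u l) * a k * (starRingEnd ℂ) (a l)

/-- The class `𝒫(S^d, G)`: continuous functions `f` on `[-1,1] × G` such that the kernel
`((ξ,u),(η,v)) ↦ f(ξ·η, u⁻¹v)` is positive definite on `(S^d × G)²`, where `S^d` is the
unit sphere of `ℝ^(d+1)`. -/
def IsPosDefSphereGroup (d : ℕ) {G : Type*} [Group G] [TopologicalSpace G]
    (f : ℝ → G → ℂ) : Prop :=
  ContinuousOn (fun p : ℝ × G => f p.1 p.2) (Set.Icc (-1 : ℝ) 1 ×ˢ Set.univ) ∧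
  ∀ (n : ℕ) (ξ : Fin n → EuclideanSpace ℝ (Fin (d + 1))) (u : Fin n → G),
    (∀ k, ‖ξ k‖ = 1) → ∀ a : Fin n → ℂ,
      0 ≤ ∑ k, ∑ l, f ⟪ξ k, ξ l⟫ ((u k)⁻¹ * u l) * a k * (starRingEnd ℂ) (a l)

/-- The `n`-th `d`-Schoenberg function of `f`:
`φ_{n,d}(u) = (N_n(d) σ_{d-1} / σ_d) ∫_{-1}^1 f(x,u) c_n(d,x) (1-x²)^{d/2-1} dx`. -/
noncomputable def schoenbergFn (d : ℕ) {G : Type*} [Group G] [TopologicalSpace G]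
    (f : ℝ → G → ℂ) (n : ℕ) (u : G) : ℂ :=
  ((NNdim n d * sigmaS (d - 1) / sigmaS d : ℝ) : ℂ) *
    ∫ x in (-1 : ℝ)..1, f x u * ((ultraC d n x : ℝ) : ℂ) *
      (((1 - x ^ 2) ^ ((d : ℝ) / 2 - 1) : ℝ) : ℂ)

/-! The Schoenberg functions are integrals of `f(·, u)` against the kernels
`x ↦ (N_n(D) σ_{D-1} / σ_D) c_n(D, x) (1 - x²)^{D/2-1}`, so it suffices to prove the recurrence
for these kernels pointwise on `[-1, 1]`. With `λ = (d - 1)/2` one has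
`N_n(d) c_n(d, x) = (2n + d - 1)/(d - 1) C_n^{(λ)}(x)` and
`σ_{d+1}/σ_{d+2} = ((d + 1)/d) σ_{d-1}/σ_d`, and the weight of `S^{d+2}` is `1 - x²` times
that of `S^d`. The kernel identity thereby becomes the contiguity relation
`4λ(λ+n+1)(1 - x²) C_n^{(λ+1)} = (2λ+n)(2λ+n+1) C_n^{(λ)} - (n+1)(n+2) C_{n+2}^{(λ)}`,
which is checked coefficientwise once all three sides are written as sums over the powers
`(2x)^{n+2-2k}`. -/

lemma ascPochhammer_eval_succ_left {S : Type*} [CommSemiring S] (n : ℕ) (x : S) :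
    (ascPochhammer S (n + 1)).eval x = x * (ascPochhammer S n).eval (x + 1) := by
  rw [ascPochhammer_succ_left, eval_mul, eval_X, eval_comp, eval_add, eval_X, eval_one]

lemma gegenbauerC_eq_sum_shift (lam : ℝ) (n : ℕ) (x : ℝ) :
    gegenbauerC lam n x = ∑ k ∈ Finset.range (n / 2 + 2),
      -((-1 : ℝ) ^ k * ((k : ℝ) * (ascPochhammer ℝ (n + 1 - k)).eval lam /
        ((k.factorial : ℝ) * ((n + 2 - 2 * k).factorial : ℝ))) *
          (2 * x) ^ (n + 2 - 2 * k)) := by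
  rw [Finset.sum_range_succ', gegenbauerC]
  simp only [Nat.cast_zero, zero_mul, zero_div, mul_zero, neg_zero, add_zero]
  refine Finset.sum_congr rfl fun k hk => ?_
  have hk : 2 * k ≤ n := by have := Finset.mem_range.mp hk; omega
  rw [show n + 2 - 2 * (k + 1) = n - 2 * k by omega, show n + 1 - (k + 1) = n - k by omega,
    Nat.factorial_succ, pow_succ]
  push_cast
  field_simp

lemma sq_mul_gegenbauerC_eq_sum (lam : ℝ) (n : ℕ) (x : ℝ) :
    x ^ 2 * gegenbauerC lam n x = ∑ k ∈ Finset.range (n / 2 + 2),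
      (-1 : ℝ) ^ k * (((n + 2 - 2 * k : ℕ) : ℝ) * (((n + 2 - 2 * k : ℕ) : ℝ) - 1) *
        (ascPochhammer ℝ (n - k)).eval lam /
          (4 * (k.factorial : ℝ) * ((n + 2 - 2 * k).factorial : ℝ))) *
            (2 * x) ^ (n + 2 - 2 * k) := by
  have hlast : ∀ m : ℕ, m = 0 ∨ m = 1 → (m : ℝ) * ((m : ℝ) - 1) = 0 := by
    rintro m (rfl | rfl) <;> simp
  rw [Finset.sum_range_succ, hlast _ (by omega)]
  simp only [zero_mul, zero_div, mul_zero, add_zero]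
  rw [gegenbauerC, Finset.mul_sum]
  refine Finset.sum_congr rfl fun k hk => ?_
  have hk : 2 * k ≤ n := by have := Finset.mem_range.mp hk; omega
  obtain ⟨m, hm⟩ : ∃ m, n - 2 * k = m := ⟨_, rfl⟩
  rw [show n + 2 - 2 * k = m + 2 by omega, show n - k = m + k by omega, hm,
    Nat.factorial_succ, Nat.factorial_succ, pow_add]
  push_cast
  field_simp
  ring

lemma ascPochhammer_contiguity_coeff (lam : ℝ) {n k : ℕ} (hk : 2 * k ≤ n + 2) :
    4 * lam * (lam + n + 1) * (k * (ascPochhammer ℝ (n + 1 - k)).eval (lam + 1) +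
        ((n + 2 - 2 * k : ℕ) : ℝ) * (((n + 2 - 2 * k : ℕ) : ℝ) - 1) / 4 *
          (ascPochhammer ℝ (n - k)).eval (lam + 1))
      = (2 * lam + n) * (2 * lam + n + 1) * k * (ascPochhammer ℝ (n + 1 - k)).eval lam
        + (n + 1) * (n + 2) * (ascPochhammer ℝ (n + 2 - k)).eval lam := by
  rcases le_or_gt k n with hkn | hnk
  · obtain ⟨i, rfl⟩ : ∃ i, n = k + i := ⟨n - k, by omega⟩
    rw [show k + i + 1 - k = i + 1 by omega, show k + i - k = i by omega,
      show k + i + 2 - k = i + 2 by omega, Nat.cast_sub hk,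
      ascPochhammer_eval_succ_left (i + 1) lam, ascPochhammer_succ_eval i (lam + 1),
      ascPochhammer_eval_succ_left i lam]
    push_cast
    ring
  · obtain ⟨rfl, rfl⟩ : n = 0 ∧ k = 1 := by omega
    norm_num [ascPochhammer_one]
    ring

lemma gegenbauerC_contiguity (lam : ℝ) (n : ℕ) (x : ℝ) :
    4 * lam * (lam + n + 1) * ((1 - x ^ 2) * gegenbauerC (lam + 1) n x)
      = (2 * lam + n) * (2 * lam + n + 1) * gegenbauerC lam n x
        - (n + 1) * (n + 2) * gegenbauerC lam (n + 2) x := by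
  have hrange : (n + 2) / 2 + 1 = n / 2 + 2 := by omega
  rw [sub_mul, one_mul, sq_mul_gegenbauerC_eq_sum, gegenbauerC_eq_sum_shift (lam + 1),
    gegenbauerC_eq_sum_shift lam, gegenbauerC, hrange, ← Finset.sum_sub_distrib,
    Finset.mul_sum, Finset.mul_sum, Finset.mul_sum, ← Finset.sum_sub_distrib]
  refine Finset.sum_congr rfl fun k hk => ?_
  have hk : 2 * k ≤ n + 2 := by have := Finset.mem_range.mp hk; omega
  linear_combination (-(-1 : ℝ) ^ k * (2 * x) ^ (n + 2 - 2 * k) /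
      ((k.factorial : ℝ) * ((n + 2 - 2 * k).factorial : ℝ))) *
    ascPochhammer_contiguity_coeff lam hk

lemma gegenbauerC_one (lam : ℝ) (n : ℕ) :
    gegenbauerC lam n 1 = (ascPochhammer ℝ n).eval (2 * lam) / n.factorial := by
  induction n using Nat.strong_induction_on with
  | _ n ih =>
    match n with
    | 0 => simp [gegenbauerC]
    | 1 => simp [gegenbauerC]; ring
    | m + 2 =>
      -- at `x = 1` the contiguity relation degenerates into a two-term recurrence
      have hrec := gegenbauerC_contiguity lam m 1
      rw [ih m (by omega)] at hrec
      have hm : ((m : ℝ) + 1) * (m + 2) ≠ 0 := by positivity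
      rw [Nat.factorial_succ, Nat.factorial_succ, ascPochhammer_succ_eval,
        ascPochhammer_succ_eval]
      field_simp at hrec ⊢
      push_cast
      linear_combination hrec

lemma gegenbauerC_one_pos {lam : ℝ} (hlam : 0 < lam) (n : ℕ) : 0 < gegenbauerC lam n 1 := by
  rw [gegenbauerC_one]
  have := ascPochhammer_pos n (2 * lam) (by linarith)
  positivity

lemma continuous_gegenbauerC (lam : ℝ) (n : ℕ) : Continuous (gegenbauerC lam n) := by
  unfold gegenbauerC
  fun_prop

lemma continuous_ultraC (d n : ℕ) : Continuous (ultraC d n) := by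
  unfold ultraC chebyshevT
  split_ifs
  · exact Polynomial.continuous _
  · exact (continuous_gegenbauerC _ _).div_const _

lemma NNdim_mul_ultraC {d : ℕ} (hd : 2 ≤ d) (n : ℕ) (x : ℝ) :
    NNdim n d * ultraC d n x
      = (2 * n + d - 1) / (d - 1) * gegenbauerC (((d : ℝ) - 1) / 2) n x := by
  have hd' : (2 : ℝ) ≤ d := by exact_mod_cast hd
  have hC1 := gegenbauerC_one_pos (lam := ((d : ℝ) - 1) / 2) (by linarith) n
  have h2lam : 2 * (((d : ℝ) - 1) / 2) = d - 1 := by ring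
  rw [gegenbauerC_one, h2lam] at hC1
  rw [ultraC, if_neg (by omega), gegenbauerC_one, h2lam]
  rcases n with _ | m
  · have : (d : ℝ) - 1 ≠ 0 := by linarith
    simp [NNdim]
    field_simp
  · have hP := ascPochhammer_pos m (d : ℝ) (by linarith)
    rw [NNdim, if_neg (by omega), Nat.add_sub_cancel, ascPochhammer_eval_succ_left,
      sub_add_cancel]
    field_simp

lemma NNdim_mul_ultraC_add_two {d : ℕ} (hd : 2 ≤ d) (n : ℕ) (x : ℝ) :
    (d + 1) / d * (NNdim n (d + 2) * ultraC (d + 2) n x) * (1 - x ^ 2)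
      = (n + d - 1) * (n + d) / (d * (2 * n + d - 1)) * (NNdim n d * ultraC d n x)
        - (n + 1) * (n + 2) / (d * (2 * n + d + 3)) * (NNdim (n + 2) d * ultraC d (n + 2) x) := by
  have hd' : (2 : ℝ) ≤ d := by exact_mod_cast hd
  have hshift : NNdim n (d + 2) * ultraC (d + 2) n x
      = (2 * n + d + 1) / (d + 1) * gegenbauerC (((d : ℝ) - 1) / 2 + 1) n x := by
    rw [NNdim_mul_ultraC (by omega)]
    push_cast
    ring_nf
  rw [hshift, NNdim_mul_ultraC hd, NNdim_mul_ultraC hd]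
  have hcont := gegenbauerC_contiguity (((d : ℝ) - 1) / 2) n x
  have h1 : (d : ℝ) - 1 ≠ 0 := by linarith
  have h2 : 2 * (n : ℝ) + d - 1 ≠ 0 := by linarith [(n.cast_nonneg : (0 : ℝ) ≤ n)]
  have h3 : 2 * (n : ℝ) + d + 3 ≠ 0 := by positivity
  have h4 : (d : ℝ) + 1 ≠ 0 := by positivity
  have h5 : (d : ℝ) ≠ 0 := by positivity
  generalize gegenbauerC (((d : ℝ) - 1) / 2 + 1) n x = A at hcont ⊢
  generalize gegenbauerC (((d : ℝ) - 1) / 2) n x = B at hcont ⊢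
  generalize gegenbauerC (((d : ℝ) - 1) / 2) (n + 2) x = C at hcont ⊢
  push_cast
  field_simp
  linear_combination (2 * (n : ℝ) + d + 3) * hcont

lemma sigmaS_add_two (d : ℕ) : sigmaS (d + 2) = 2 * Real.pi / (d + 1) * sigmaS d := by
  have hΓ : Real.Gamma ((((d + 2 : ℕ) : ℝ) + 1) / 2)
      = ((d : ℝ) + 1) / 2 * Real.Gamma (((d : ℝ) + 1) / 2) := by
    rw [← Real.Gamma_add_one (by positivity)]
    push_cast
    ring_nf
  have hπ : Real.pi ^ ((((d + 2 : ℕ) : ℝ) + 1) / 2)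
      = Real.pi * Real.pi ^ (((d : ℝ) + 1) / 2) := by
    rw [← Real.rpow_one_add' Real.pi_pos.le (by positivity)]
    push_cast
    ring_nf
  have := Real.Gamma_pos_of_pos (s := ((d : ℝ) + 1) / 2) (by positivity)
  rw [sigmaS, sigmaS, hΓ, hπ]
  field_simp

lemma sigmaS_pos (d : ℕ) : 0 < sigmaS d := by
  have := Real.Gamma_pos_of_pos (s := ((d : ℝ) + 1) / 2) (by positivity)
  unfold sigmaS
  positivity

noncomputable def schoenbergKernel (D n : ℕ) (x : ℝ) : ℝ :=
  NNdim n D * sigmaS (D - 1) / sigmaS D * ultraC D n x * (1 - x ^ 2) ^ ((D : ℝ) / 2 - 1)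

lemma schoenbergFn_eq_integral_kernel (D : ℕ) {G : Type*} [Group G] [TopologicalSpace G]
    (f : ℝ → G → ℂ) (n : ℕ) (u : G) :
    schoenbergFn D f n u = ∫ x in (-1 : ℝ)..1, f x u * (schoenbergKernel D n x : ℂ) := by
  rw [schoenbergFn, ← intervalIntegral.integral_const_mul]
  congr 1 with x
  simp only [schoenbergKernel]
  push_cast
  ring

lemma continuous_schoenbergKernel {D : ℕ} (hD : 2 ≤ D) (n : ℕ) :
    Continuous (schoenbergKernel D n) := by
  have hexp : 0 ≤ (D : ℝ) / 2 - 1 := by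
    have : (2 : ℝ) ≤ D := by exact_mod_cast hD
    linarith
  unfold schoenbergKernel
  exact (continuous_const.mul (continuous_ultraC D n)).mul
    ((Real.continuous_rpow_const hexp).comp (by fun_prop))

lemma schoenbergKernel_add_two {d : ℕ} (hd : 2 ≤ d) (n : ℕ) {x : ℝ}
    (hx : x ∈ Set.Icc (-1 : ℝ) 1) :
    schoenbergKernel (d + 2) n x
      = (n + d - 1) * (n + d) / (d * (2 * n + d - 1)) * schoenbergKernel d n x
        - (n + 1) * (n + 2) / (d * (2 * n + d + 3)) * schoenbergKernel d (n + 2) x := by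
  have hd' : (2 : ℝ) ≤ d := by exact_mod_cast hd
  have hw : (1 - x ^ 2) ^ (((d + 2 : ℕ) : ℝ) / 2 - 1)
      = (1 - x ^ 2) ^ ((d : ℝ) / 2 - 1) * (1 - x ^ 2) := by
    have : 0 ≤ 1 - x ^ 2 := by nlinarith [hx.1, hx.2]
    rw [← Real.rpow_add_one' this (by linarith)]
    push_cast
    ring_nf
  have hσ : sigmaS (d + 2 - 1) / sigmaS (d + 2) = (d + 1) / d * (sigmaS (d - 1) / sigmaS d) := by
    obtain ⟨e, rfl⟩ : ∃ e, d = e + 1 := ⟨d - 1, by omega⟩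
    rw [show e + 1 + 2 - 1 = e + 2 by omega, sigmaS_add_two, sigmaS_add_two, Nat.add_sub_cancel]
    have := sigmaS_pos e
    have := sigmaS_pos (e + 1)
    push_cast
    field_simp
  have hrec := NNdim_mul_ultraC_add_two hd n x
  simp only [schoenbergKernel, mul_div_assoc, hw, hσ]
  linear_combination (sigmaS (d - 1) / sigmaS d * (1 - x ^ 2) ^ ((d : ℝ) / 2 - 1)) * hrec

lemma IsPosDefSphereGroup.continuousOn_apply {D : ℕ} {G : Type*} [Group G] [TopologicalSpace G]
    {f : ℝ → G → ℂ} (hf : IsPosDefSphereGroup D f) (u : G) :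
    ContinuousOn (fun x => f x u) (Set.Icc (-1) 1) :=
  hf.1.comp (continuous_id.prodMk continuous_const).continuousOn fun _ hx => ⟨hx, trivial⟩

theorem schoenbergFn_recurrence_general (d : ℕ) (hd : 2 ≤ d) {G : Type*} [Group G]
    [TopologicalSpace G] (f : ℝ → G → ℂ) (hf : IsPosDefSphereGroup (d + 2) f) :
    ∀ (n : ℕ) (u : G),
      schoenbergFn (d + 2) f n u =
        (((((n : ℝ) + d - 1) * ((n : ℝ) + d)) / ((d : ℝ) * (2 * n + d - 1)) : ℝ) : ℂ) *
          schoenbergFn d f n u -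
        (((((n : ℝ) + 1) * ((n : ℝ) + 2)) / ((d : ℝ) * (2 * n + d + 3)) : ℝ) : ℂ) *
          schoenbergFn d f (n + 2) u := by
  intro n u
  have hint (m : ℕ) :
      IntervalIntegrable (fun x => f x u * (schoenbergKernel d m x : ℂ)) volume (-1) 1 :=
    ((hf.continuousOn_apply u).mul (Complex.continuous_ofReal.comp
      (continuous_schoenbergKernel hd m)).continuousOn).intervalIntegrable_of_Icc (by norm_num)
  simp only [schoenbergFn_eq_integral_kernel]
  rw [← intervalIntegral.integral_const_mul, ← intervalIntegral.integral_const_mul,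
    ← intervalIntegral.integral_sub ((hint n).const_mul _) ((hint (n + 2)).const_mul _)]
  refine intervalIntegral.integral_congr fun x hx => ?_
  rw [Set.uIcc_of_le (by norm_num)] at hx
  simp only [schoenbergKernel_add_two hd n hx]
  push_cast
  ring

/-- Proposition 3.6 (b) of Berg–Porcu: for `d ≥ 2` and `f ∈ 𝒫(S^{d+2}, G)`, the `d`- and
`(d+2)`-Schoenberg functions of `f` satisfy
`φ_{n,d+2} = ((n+d-1)(n+d)/(d(2n+d-1))) φ_{n,d} - ((n+1)(n+2)/(d(2n+d+3))) φ_{n+2,d}`. -/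
theorem schoenbergFn_recurrence (d : ℕ) (hd : 2 ≤ d) {G : Type*} [Group G]
    [TopologicalSpace G] [IsTopologicalGroup G] [LocallyCompactSpace G]
    (f : ℝ → G → ℂ) (hf : IsPosDefSphereGroup (d + 2) f) :
    ∀ (n : ℕ) (u : G),
      schoenbergFn (d + 2) f n u =
        (((((n : ℝ) + d - 1) * ((n : ℝ) + d)) / ((d : ℝ) * (2 * n + d - 1)) : ℝ) : ℂ) *
          schoenbergFn d f n u -
        (((((n : ℝ) + 1) * ((n : ℝ) + 2)) / ((d : ℝ) * (2 * n + d + 3)) : ℝ) : ℂ) *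
          schoenbergFn d f (n + 2) u :=
  schoenbergFn_recurrence_general d hd f hf
end

section
/- Let G be a locally compact group and suppose f ∈ 𝒫(S^{3},G) (so that also f ∈ 𝒫(S^1,G)). Let φ_{n,1} and φ_{n,3} denote the 1- and 3-Schoenberg functions of f, given by φ_{n,D}(u) := (N_n(D) σ_{D-1} / σ_D) ∫_{-1}^1 f(x,u) c_n(D,x) (1-x²)^{D/2-1} dx for D ∈ {1, 3}. Then φ_{0,3} = φ_{0,1} - (1/2)φ_{2,1}, and φ_{n,3} = (1/2)(n+1)(φ_{n,1} - φ_{n+2,1}) for all n ≥ 1. -/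
open scoped RealInnerProductSpace BigOperators ComplexOrder
open Polynomial MeasureTheory Filter

/-! For `λ = 1` the Gegenbauer polynomial is the Chebyshev polynomial `U_n`, so
`c_n(3, x) = U_n(x) / (n + 1)`. The identity `2 (1 - x²) U_n = T_n - T_{n+2}` turns the weight
`(1 - x²)^{1/2}` of `S³` into the weight `(1 - x²)^{-1/2}` of `S¹`, so the integral defining
`φ_{n,3}` is a difference of the integrals defining `φ_{n,1}` and `φ_{n+2,1}`; the recurrences
follow by comparing the constants `N_n(d) σ_{d-1} / σ_d`. -/

open Real Set intervalIntegral

-- Termwise three-term recurrence for `U_n(y / 2) = ∑ₖ (-1)ᵏ C(n-k, k) yⁿ⁻²ᵏ`; for `2k > n` all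
-- binomials vanish, which makes the truncated subtractions harmless.
lemma chebyshevU_term_add_two {R : Type*} [CommRing R] (n k : ℕ) (y : R) :
    (-1) ^ (k + 1) * ((n + 2 - (k + 1)).choose (k + 1) : R) * y ^ (n + 2 - 2 * (k + 1)) =
      y * ((-1) ^ (k + 1) * ((n + 1 - (k + 1)).choose (k + 1) : R) * y ^ (n + 1 - 2 * (k + 1))) -
        (-1) ^ k * ((n - k).choose k : R) * y ^ (n - 2 * k) := by
  rcases lt_trichotomy (2 * k) n with h | rfl | h
  · obtain ⟨m, rfl⟩ := Nat.exists_eq_add_of_lt h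
    rw [show 2 * k + m + 1 + 2 - (k + 1) = k + m + 1 + 1 by omega,
      show 2 * k + m + 1 + 1 - (k + 1) = k + m + 1 by omega,
      show 2 * k + m + 1 - k = k + m + 1 by omega,
      show 2 * k + m + 1 + 2 - 2 * (k + 1) = m + 1 by omega,
      show 2 * k + m + 1 + 1 - 2 * (k + 1) = m by omega,
      show 2 * k + m + 1 - 2 * k = m + 1 by omega,
      Nat.choose_succ_succ]
    push_cast
    ring
  · rw [show 2 * k + 2 - (k + 1) = k + 1 by omega, show 2 * k + 1 - (k + 1) = k by omega,
      show 2 * k - k = k by omega, show 2 * k + 2 - 2 * (k + 1) = 0 by omega, Nat.choose_self,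
      Nat.choose_self, Nat.choose_succ_self]
    simp [pow_succ]
  · rw [Nat.choose_eq_zero_of_lt (by omega : n + 2 - (k + 1) < k + 1),
      Nat.choose_eq_zero_of_lt (by omega : n + 1 - (k + 1) < k + 1),
      Nat.choose_eq_zero_of_lt (by omega : n - k < k)]
    simp

lemma gegenbauerC_one_eq_sum (x : ℝ) {n N : ℕ} (hN : n / 2 + 1 ≤ N) :
    gegenbauerC 1 n x =
      ∑ k ∈ Finset.range N, (-1) ^ k * ((n - k).choose k : ℝ) * (2 * x) ^ (n - 2 * k) := by
  calc gegenbauerC 1 n x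
      = ∑ k ∈ Finset.range (n / 2 + 1),
          (-1) ^ k * ((n - k).choose k : ℝ) * (2 * x) ^ (n - 2 * k) := by
        refine Finset.sum_congr rfl fun k hk => ?_
        rw [Finset.mem_range] at hk
        rw [ascPochhammer_eval_one, Nat.cast_choose ℝ (by omega : k ≤ n - k),
          show n - k - k = n - 2 * k by omega]
    _ = _ := by
        refine Finset.sum_subset (Finset.range_subset_range.2 hN) fun k _ hk => ?_
        rw [Finset.mem_range] at hk
        rw [Nat.choose_eq_zero_of_lt (by omega : n - k < k)]
        simp

lemma gegenbauerC_one_add_two (n : ℕ) (x : ℝ) :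
    gegenbauerC 1 (n + 2) x = 2 * x * gegenbauerC 1 (n + 1) x - gegenbauerC 1 n x := by
  rw [gegenbauerC_one_eq_sum x (N := n + 2) (by omega),
    gegenbauerC_one_eq_sum x (N := n + 2) (by omega),
    gegenbauerC_one_eq_sum x (N := n + 1) (by omega), Finset.sum_range_succ' _ (n + 1),
    Finset.sum_range_succ' _ (n + 1)]
  simp only [chebyshevU_term_add_two, Finset.sum_sub_distrib, ← Finset.mul_sum]
  simp only [Nat.reduceSubDiff, pow_zero, tsub_zero, Nat.choose_zero_right, Nat.cast_one, mul_one,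
    mul_zero, one_mul]
  ring

lemma gegenbauerC_one_eq_chebyshevU (n : ℕ) (x : ℝ) :
    gegenbauerC 1 n x = (Chebyshev.U ℝ n).eval x := by
  induction n using Nat.twoStepInduction with
  | zero => simp [gegenbauerC]
  | one => simp [gegenbauerC]
  | more n h0 h1 =>
    rw [gegenbauerC_one_add_two, h0, h1]
    push_cast
    simp [Chebyshev.U_add_two]

lemma ultraC_three (n : ℕ) (x : ℝ) : ultraC 3 n x = (Chebyshev.U ℝ n).eval x / (n + 1) := by
  rw [ultraC, if_neg (by norm_num), show (((3 : ℕ) : ℝ) - 1) / 2 = 1 by norm_num,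
    gegenbauerC_one_eq_chebyshevU, gegenbauerC_one_eq_chebyshevU, Chebyshev.U_eval_one]
  push_cast
  rfl

lemma chebyshevU_mul_sqrt_one_sub_sq (n : ℤ) (x : ℝ) :
    (Chebyshev.U ℝ n).eval x * √(1 - x ^ 2) =
      ((Chebyshev.T ℝ n).eval x - (Chebyshev.T ℝ (n + 2)).eval x) / 2 * (√(1 - x ^ 2))⁻¹ := by
  have hU := congrArg (eval x) (Chebyshev.one_sub_X_sq_mul_U_eq_pol_in_T ℝ n)
  have hT := congrArg (eval x) (Chebyshev.T_add_two ℝ n)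
  simp only [eval_mul, eval_sub, eval_one, eval_pow, eval_X, eval_ofNat] at hU hT
  have hTU : ((Chebyshev.T ℝ n).eval x - (Chebyshev.T ℝ (n + 2)).eval x) / 2 =
      (Chebyshev.U ℝ n).eval x * (1 - x ^ 2) := by
    linear_combination (1 / 2 : ℝ) * hT - hU
  rw [hTU, mul_assoc, ← div_eq_mul_inv, Real.div_sqrt]

lemma intervalIntegrable_mul_sqrt_one_sub_sq_inv {g : ℝ → ℂ}
    (hg : ContinuousOn g (uIcc (-1) 1)) :
    IntervalIntegrable (fun x => g x * ((√(1 - x ^ 2))⁻¹ : ℝ)) volume (-1) 1 := by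
  simpa [Complex.real_smul, mul_comm] using
    Chebyshev.intervalIntegrable_sqrt_one_sub_sq_inv.smul_continuousOn hg

lemma integral_mul_chebyshevU_mul_sqrt {g : ℝ → ℂ} (hg : ContinuousOn g (uIcc (-1) 1)) (n : ℤ) :
    ∫ x in (-1 : ℝ)..1, g x * (((Chebyshev.U ℝ n).eval x : ℝ) : ℂ) * (√(1 - x ^ 2) : ℝ) =
      2⁻¹ * ((∫ x in (-1 : ℝ)..1,
          g x * (((Chebyshev.T ℝ n).eval x : ℝ) : ℂ) * ((√(1 - x ^ 2))⁻¹ : ℝ)) -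
        ∫ x in (-1 : ℝ)..1,
          g x * (((Chebyshev.T ℝ (n + 2)).eval x : ℝ) : ℂ) * ((√(1 - x ^ 2))⁻¹ : ℝ)) := by
  have hT (m : ℤ) : IntervalIntegrable
      (fun x => g x * (((Chebyshev.T ℝ m).eval x : ℝ) : ℂ) * ((√(1 - x ^ 2))⁻¹ : ℝ))
      volume (-1) 1 :=
    intervalIntegrable_mul_sqrt_one_sub_sq_inv
      (g := fun x => g x * (((Chebyshev.T ℝ m).eval x : ℝ) : ℂ))
      (hg.mul (Complex.continuous_ofReal.comp (Chebyshev.T ℝ m).continuous).continuousOn)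
  rw [← integral_sub (hT n) (hT (n + 2)), ← intervalIntegral.integral_const_mul]
  refine integral_congr fun x _ => ?_
  have h := congrArg ((↑) : ℝ → ℂ) (chebyshevU_mul_sqrt_one_sub_sq n x)
  push_cast at h ⊢
  linear_combination g x * h

lemma sigmaS_zero : sigmaS 0 = 2 := by
  rw [sigmaS, Nat.cast_zero, zero_add, Real.Gamma_one_half_eq, ← Real.sqrt_eq_rpow]
  field_simp [Real.sqrt_ne_zero'.2 Real.pi_pos]

lemma sigmaS_one : sigmaS 1 = 2 * π := by
  norm_num [sigmaS]

lemma sigmaS_two : sigmaS 2 = 4 * π := by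
  rw [sigmaS, show ((2 : ℕ) + 1) / 2 = (1 / 2 : ℝ) + 1 by norm_num,
    Real.Gamma_add_one (by norm_num), Real.Gamma_one_half_eq, Real.rpow_add Real.pi_pos,
    Real.rpow_one, ← Real.sqrt_eq_rpow]
  field_simp [Real.sqrt_ne_zero'.2 Real.pi_pos]
  ring

lemma sigmaS_three : sigmaS 3 = 2 * π ^ 2 := by
  rw [sigmaS, show ((3 : ℕ) + 1) / 2 = ((2 : ℕ) : ℝ) by norm_num, Real.rpow_natCast]
  norm_num

lemma NNdim_zero (d : ℕ) : NNdim 0 d = 1 := if_pos rfl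

lemma NNdim_one {n : ℕ} (hn : n ≠ 0) : NNdim n 1 = 2 := by
  obtain ⟨m, rfl⟩ : ∃ m, n = m + 1 := ⟨n - 1, by omega⟩
  rw [NNdim, if_neg hn, Nat.add_sub_cancel, Nat.cast_one, ascPochhammer_eval_one,
    Nat.factorial_succ]
  push_cast
  field_simp
  ring

lemma NNdim_three {n : ℕ} (hn : n ≠ 0) : NNdim n 3 = ((n : ℝ) + 1) ^ 2 := by
  obtain ⟨m, rfl⟩ : ∃ m, n = m + 1 := ⟨n - 1, by omega⟩
  have h := factorial_mul_ascPochhammer ℝ 2 m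
  rw [show 2 + m = m + 1 + 1 by omega, Nat.factorial_succ (m + 1), Nat.factorial_succ m] at h
  norm_num at h
  rw [NNdim, if_neg hn, Nat.add_sub_cancel, Nat.factorial_succ]
  push_cast
  field_simp
  linear_combination ((m : ℝ) + 2) * h

lemma NNdim_one_ne_zero (n : ℕ) : NNdim n 1 ≠ 0 := by
  rcases eq_or_ne n 0 with rfl | hn
  · simp [NNdim_zero]
  · simp [NNdim_one hn]

section Schoenberg

variable {G : Type*} [Group G] [TopologicalSpace G]

lemma schoenbergFn_one_eq (f : ℝ → G → ℂ) (n : ℕ) (u : G) :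
    schoenbergFn 1 f n u = ((NNdim n 1 / π : ℝ) : ℂ) *
      ∫ x in (-1 : ℝ)..1,
        f x u * (((Chebyshev.T ℝ n).eval x : ℝ) : ℂ) * ((√(1 - x ^ 2))⁻¹ : ℝ) := by
  rw [schoenbergFn, Nat.sub_self, sigmaS_zero, sigmaS_one]
  congr 1
  · field_simp
  · refine integral_congr fun x hx => ?_
    rw [uIcc_of_le (by norm_num), mem_Icc] at hx
    rw [ultraC, if_pos rfl, chebyshevT, show ((1 : ℕ) : ℝ) / 2 - 1 = -(1 / 2) by norm_num,
      Real.rpow_neg (by nlinarith), ← Real.sqrt_eq_rpow]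

lemma schoenbergFn_three_eq (f : ℝ → G → ℂ) (n : ℕ) (u : G) :
    schoenbergFn 3 f n u = ((2 * NNdim n 3 / (π * (n + 1)) : ℝ) : ℂ) *
      ∫ x in (-1 : ℝ)..1, f x u * (((Chebyshev.U ℝ n).eval x : ℝ) : ℂ) * (√(1 - x ^ 2) : ℝ) := by
  have hπ : π ≠ 0 := Real.pi_ne_zero
  have hint : ∫ x in (-1 : ℝ)..1, f x u * ((ultraC 3 n x : ℝ) : ℂ) *
      (((1 - x ^ 2) ^ (((3 : ℕ) : ℝ) / 2 - 1) : ℝ) : ℂ) = (((n : ℝ) + 1)⁻¹ : ℝ) *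
      ∫ x in (-1 : ℝ)..1, f x u * (((Chebyshev.U ℝ n).eval x : ℝ) : ℂ) * (√(1 - x ^ 2) : ℝ) := by
    rw [← intervalIntegral.integral_const_mul]
    refine integral_congr fun x _ => ?_
    rw [ultraC_three, show ((3 : ℕ) : ℝ) / 2 - 1 = 1 / 2 by norm_num, ← Real.sqrt_eq_rpow]
    push_cast
    ring
  rw [schoenbergFn, show 3 - 1 = 2 from rfl, sigmaS_two, sigmaS_three, hint, ← mul_assoc]
  congr 1
  push_cast
  field_simp
  ring

lemma schoenbergFn_three_eq_sub {f : ℝ → G → ℂ} {u : G}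
    (hf : ContinuousOn (fun x => f x u) (uIcc (-1) 1)) (n : ℕ) :
    schoenbergFn 3 f n u = ((NNdim n 3 / (n + 1) : ℝ) : ℂ) *
      (schoenbergFn 1 f n u / (NNdim n 1 : ℂ) -
        schoenbergFn 1 f (n + 2) u / (NNdim (n + 2) 1 : ℂ)) := by
  have h₁ : (NNdim n 1 : ℂ) ≠ 0 := by exact_mod_cast NNdim_one_ne_zero n
  have h₂ : (NNdim (n + 2) 1 : ℂ) ≠ 0 := by exact_mod_cast NNdim_one_ne_zero (n + 2)
  have hπ : (π : ℂ) ≠ 0 := by exact_mod_cast Real.pi_ne_zero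
  have hn : ((n : ℂ) + 1) ≠ 0 := by exact_mod_cast n.succ_ne_zero
  rw [schoenbergFn_three_eq, schoenbergFn_one_eq, schoenbergFn_one_eq,
    integral_mul_chebyshevU_mul_sqrt hf]
  push_cast
  field_simp

end Schoenberg

theorem schoenbergFn_recurrence_dim_one_general {G : Type*} [Group G]
    [TopologicalSpace G]
    (f : ℝ → G → ℂ) (hf : IsPosDefSphereGroup 3 f) :
    (∀ u : G, schoenbergFn 3 f 0 u = schoenbergFn 1 f 0 u - (1 / 2 : ℂ) * schoenbergFn 1 f 2 u) ∧
    ∀ (n : ℕ), 1 ≤ n → ∀ u : G,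
      schoenbergFn 3 f n u =
        (1 / 2 : ℂ) * (((n : ℝ) + 1 : ℝ) : ℂ) *
          (schoenbergFn 1 f n u - schoenbergFn 1 f (n + 2) u) := by
  have hcont (u : G) : ContinuousOn (fun x => f x u) (uIcc (-1) 1) :=
    hf.1.comp (continuous_id.prodMk continuous_const).continuousOn fun x hx =>
      ⟨by rwa [uIcc_of_le (by norm_num)] at hx, mem_univ u⟩
  refine ⟨fun u => ?_, fun n hn u => ?_⟩
  · rw [schoenbergFn_three_eq_sub (hcont u), NNdim_zero, NNdim_zero, NNdim_one two_ne_zero]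
    push_cast
    ring
  · rw [schoenbergFn_three_eq_sub (hcont u), NNdim_three (by omega), NNdim_one (by omega),
      NNdim_one (by omega)]
    have hn : ((n : ℂ) + 1) ≠ 0 := by exact_mod_cast n.succ_ne_zero
    push_cast
    field_simp

/-- Proposition 3.6 (a) of Berg–Porcu: for `f ∈ 𝒫(S^3, G)`, the `1`- and `3`-Schoenberg
functions of `f` satisfy `φ_{0,3} = φ_{0,1} - (1/2) φ_{2,1}` and
`φ_{n,3} = (1/2)(n+1)(φ_{n,1} - φ_{n+2,1})` for `n ≥ 1`. -/
theorem schoenbergFn_recurrence_dim_one {G : Type*} [Group G]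
    [TopologicalSpace G] [IsTopologicalGroup G] [LocallyCompactSpace G]
    (f : ℝ → G → ℂ) (hf : IsPosDefSphereGroup 3 f) :
    (∀ u : G, schoenbergFn 3 f 0 u = schoenbergFn 1 f 0 u - (1 / 2 : ℂ) * schoenbergFn 1 f 2 u) ∧
    ∀ (n : ℕ), 1 ≤ n → ∀ u : G,
      schoenbergFn 3 f n u =
        (1 / 2 : ℂ) * (((n : ℝ) + 1 : ℝ) : ℂ) *
          (schoenbergFn 1 f n u - schoenbergFn 1 f (n + 2) u) :=
  schoenbergFn_recurrence_dim_one_general f hf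
end

section
/- For all real λ, μ > 0, all n ∈ ℕ₀ and all x ∈ ℝ (indeed as an identity of polynomials): C_n^{(λ)}(x) = ∑_{k=0}^{⌊n/2⌋} [ (λ)_{n-k} (λ-μ)_k (n+μ-2k) / ((μ)_{n-k+1} k!) ] · C_{n-2k}^{(μ)}(x). -/
open scoped RealInnerProductSpace BigOperators ComplexOrder
open Polynomial MeasureTheory Filter

/- ===== auxiliary machinery for the connection formula ===== -/

noncomputable def pe (m : ℕ) (a : ℝ) : ℝ := (ascPochhammer ℝ m).eval a

lemma pe_succ (m : ℕ) (a : ℝ) : pe (m+1) a = pe m a * (a + m) :=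
  ascPochhammer_succ_eval m a

lemma pe_zero (a : ℝ) : pe 0 a = 1 := by simp [pe]

lemma pe_pos {a : ℝ} (ha : 0 < a) (m : ℕ) : 0 < pe m a :=
  ascPochhammer_pos m a ha

noncomputable def gegT (lam mu : ℝ) (n j k : ℕ) : ℝ :=
  (-1:ℝ)^k * pe (n-k) lam * pe k (lam-mu) * ((n:ℝ) + mu - 2*k) * pe (n-k-j) mu /
    (pe (n-k+1) mu * (Nat.factorial k : ℝ) * (Nat.factorial (j-k) : ℝ))

noncomputable def gegH (lam mu : ℝ) (n j k : ℕ) : ℝ :=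
  (-1:ℝ)^k * pe (n-k) lam * pe k (lam-mu) * (k:ℝ) * (lam + (n:ℝ) - k) * pe (n-k-j) mu /
    (pe (n-k+1) mu * (Nat.factorial k : ℝ) * (Nat.factorial (j+1-k) : ℝ))

lemma gegWZ (lam mu : ℝ) (hmu : 0 < mu) (n j k : ℕ) (hk : k ≤ j) (hn : 2*j+2 ≤ n) :
    (lam + (n:ℝ) - j - 1) * ((j:ℝ)+1) * gegT lam mu n (j+1) k
      = gegT lam mu n j k + (gegH lam mu n j k - gegH lam mu n j (k+1)) := by
  obtain ⟨a, rfl⟩ : ∃ a, j = k + a := ⟨j - k, by omega⟩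
  obtain ⟨b, rfl⟩ : ∃ b, n = 2*k + 2*a + 2 + b := ⟨n - (2*k+2*a+2), by omega⟩
  unfold gegT gegH
  rw [show 2*k+2*a+2+b - k = k+2*a+2+b from by omega,
      show 2*k+2*a+2+b - (k+1) = k+2*a+1+b from by omega,
      show k+2*a+2+b - (k+a) = a+2+b from by omega,
      show k+2*a+2+b - (k+a+1) = a+1+b from by omega,
      show k+2*a+1+b - (k+a) = a+1+b from by omega,
      show k+a - k = a from by omega,
      show k+a+1-k = a+1 from by omega,
      show k+a+1-(k+1) = a from by omega]
  rw [show pe (k+2*a+2+b) lam = pe (k+2*a+1+b) lam * (lam + ((k+2*a+1+b : ℕ) : ℝ)) from by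
        rw [show k+2*a+2+b = (k+2*a+1+b)+1 from by omega, pe_succ],
      show pe (k+2*a+2+b+1) mu = pe (k+2*a+1+b+1) mu * (mu + ((k+2*a+1+b+1 : ℕ) : ℝ)) from by
        rw [show k+2*a+2+b+1 = (k+2*a+1+b+1)+1 from by omega, pe_succ],
      show pe (a+2+b) mu = pe (a+1+b) mu * (mu + ((a+1+b : ℕ) : ℝ)) from by
        rw [show a+2+b = (a+1+b)+1 from by omega, pe_succ],
      show pe (k+1) (lam-mu) = pe k (lam-mu) * (lam - mu + (k:ℝ)) from pe_succ k _]
  have hQ : pe (k+2*a+1+b+1) mu ≠ 0 := (pe_pos hmu _).ne'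
  have hmu1 : mu + ((k+2*a+1+b+1 : ℕ) : ℝ) ≠ 0 :=
    (add_pos_of_pos_of_nonneg hmu (Nat.cast_nonneg _)).ne'
  have hfk : ((Nat.factorial k : ℝ)) ≠ 0 := Nat.cast_ne_zero.mpr (Nat.factorial_ne_zero k)
  have hfa : ((Nat.factorial a : ℝ)) ≠ 0 := Nat.cast_ne_zero.mpr (Nat.factorial_ne_zero a)
  have hk1 : ((k:ℝ)+1) ≠ 0 := by positivity
  have ha1 : ((a:ℝ)+1) ≠ 0 := by positivity
  push_cast [Nat.factorial_succ]
  field_simp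
  ring

lemma gegBoundary (lam mu : ℝ) (hmu : 0 < mu) (n j : ℕ) (hn : 2*j+2 ≤ n) :
    gegH lam mu n j (j+1)
      = (lam + (n:ℝ) - j - 1) * ((j:ℝ)+1) * gegT lam mu n (j+1) (j+1) := by
  obtain ⟨b, rfl⟩ : ∃ b, n = 2*j + 2 + b := ⟨n - (2*j+2), by omega⟩
  unfold gegT gegH
  rw [show 2*j+2+b - (j+1) = j+1+b from by omega,
      show j+1+b - j = b+1 from by omega,
      show j+1+b - (j+1) = b from by omega,
      show j+1-(j+1) = 0 from by omega,
      show j+1+b+1 = (j+b)+2 from by omega]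
  rw [show pe (b+1) mu = pe b mu * (mu + (b:ℝ)) from pe_succ b mu]
  have hfj1 : ((Nat.factorial (j+1) : ℝ)) ≠ 0 := Nat.cast_ne_zero.mpr (Nat.factorial_ne_zero _)
  have hQ : pe ((j+b)+2) mu ≠ 0 := (pe_pos hmu _).ne'
  push_cast [Nat.factorial_zero]
  field_simp
  ring

lemma gegH_zero (lam mu : ℝ) (n j : ℕ) : gegH lam mu n j 0 = 0 := by
  simp [gegH]

lemma gegKey (lam mu : ℝ) (hlam : 0 < lam) (hmu : 0 < mu) :
    ∀ j n : ℕ, 2*j ≤ n →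
      ∑ k ∈ Finset.range (j+1), gegT lam mu n j k
        = pe (n-j) lam / (Nat.factorial j : ℝ) := by
  intro j
  induction j with
  | zero =>
      intro n _
      rw [Finset.sum_range_one]
      unfold gegT
      simp only [Nat.sub_zero, pow_zero, Nat.factorial_zero, Nat.cast_one, Nat.cast_zero]
      rw [pe_succ, pe_zero]
      have hQ : pe n mu ≠ 0 := (pe_pos hmu _).ne'
      have hmun : mu + (n:ℝ) ≠ 0 :=
        (add_pos_of_pos_of_nonneg hmu (Nat.cast_nonneg _)).ne'
      field_simp
      ring
  | succ j ih =>
      intro n hn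
      have hn' : 2*j + 2 ≤ n := by omega
      have hc1 : (0:ℝ) < lam + (n:ℝ) - j - 1 := by
        have h : ((j:ℝ) + 1) ≤ (n:ℝ) := by exact_mod_cast (by omega : j + 1 ≤ n)
        linarith
      have hc : (lam + (n:ℝ) - j - 1) * ((j:ℝ)+1) ≠ 0 := by
        have h2 : (0:ℝ) < (j:ℝ)+1 := by positivity
        exact (mul_pos hc1 h2).ne'
      apply mul_left_cancel₀ hc
      have hstep :
          (lam + (n:ℝ) - j - 1) * ((j:ℝ)+1) *
            ∑ k ∈ Finset.range (j+1+1), gegT lam mu n (j+1) k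
          = pe (n-j) lam / (Nat.factorial j : ℝ) := by
        rw [Finset.sum_range_succ, mul_add, Finset.mul_sum]
        have h1 : ∑ k ∈ Finset.range (j+1),
              (lam + (n:ℝ) - j - 1) * ((j:ℝ)+1) * gegT lam mu n (j+1) k
            = ∑ k ∈ Finset.range (j+1),
              (gegT lam mu n j k + (gegH lam mu n j k - gegH lam mu n j (k+1))) := by
          refine Finset.sum_congr rfl (fun k hk => ?_)
          exact gegWZ lam mu hmu n j k (by have := Finset.mem_range.mp hk; omega) hn'
        rw [h1, Finset.sum_add_distrib,
            Finset.sum_range_sub' (fun k => gegH lam mu n j k),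
            gegH_zero, ← gegBoundary lam mu hmu n j hn', ih n (by omega)]
        ring
      rw [hstep]
      have hnj : n - j = (n - (j+1)) + 1 := by omega
      have hcast : ((n - (j+1) : ℕ) : ℝ) = (n:ℝ) - j - 1 := by
        rw [Nat.cast_sub (by omega : j + 1 ≤ n)]
        push_cast
        ring
      rw [hnj, pe_succ, hcast]
      have hfj : ((Nat.factorial j : ℝ)) ≠ 0 := Nat.cast_ne_zero.mpr (Nat.factorial_ne_zero _)
      push_cast [Nat.factorial_succ]
      field_simp
      ring

lemma triangle_sum (N : ℕ) (f : ℕ → ℕ → ℝ) :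
    ∑ k ∈ Finset.range (N+1), ∑ l ∈ Finset.range (N-k+1), f k l
      = ∑ j ∈ Finset.range (N+1), ∑ k ∈ Finset.range (j+1), f k (j-k) := by
  rw [Finset.sum_sigma', Finset.sum_sigma']
  refine Finset.sum_nbij' (fun p => ⟨p.1 + p.2, p.1⟩) (fun p => ⟨p.2, p.1 - p.2⟩)
    ?_ ?_ ?_ ?_ ?_
  · rintro ⟨k, l⟩ hp
    simp only [Finset.mem_sigma, Finset.mem_range] at hp ⊢
    omega
  · rintro ⟨j, k⟩ hp
    simp only [Finset.mem_sigma, Finset.mem_range] at hp ⊢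
    omega
  · rintro ⟨k, l⟩ hp
    simp only [Finset.mem_sigma, Finset.mem_range] at hp
    have h : k + l - k = l := by omega
    simp [h]
  · rintro ⟨j, k⟩ hp
    simp only [Finset.mem_sigma, Finset.mem_range] at hp
    have h : k + (j - k) = j := by omega
    simp [h]
  · rintro ⟨k, l⟩ hp
    simp

/-- Gegenbauer's connection formula (Lemma 5.1 of Berg–Porcu): for `λ, μ > 0`,
`C_n^{(λ)}(x) = ∑_{k=0}^{⌊n/2⌋} ((λ)_{n-k} (λ-μ)_k (n+μ-2k) / ((μ)_{n-k+1} k!)) C_{n-2k}^{(μ)}(x)`. -/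
theorem gegenbauer_connection (lam mu : ℝ) (hlam : 0 < lam) (hmu : 0 < mu)
    (n : ℕ) (x : ℝ) :
    gegenbauerC lam n x =
      ∑ k ∈ Finset.range (n / 2 + 1),
        ((ascPochhammer ℝ (n - k)).eval lam * (ascPochhammer ℝ k).eval (lam - mu) *
            ((n : ℝ) + mu - 2 * k) /
          ((ascPochhammer ℝ (n - k + 1)).eval mu * (Nat.factorial k : ℝ))) *
          gegenbauerC mu (n - 2 * k) x := by
  symm
  calc
    ∑ k ∈ Finset.range (n / 2 + 1),
        ((ascPochhammer ℝ (n - k)).eval lam * (ascPochhammer ℝ k).eval (lam - mu) *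
            ((n : ℝ) + mu - 2 * k) /
          ((ascPochhammer ℝ (n - k + 1)).eval mu * (Nat.factorial k : ℝ))) *
          gegenbauerC mu (n - 2 * k) x
      = ∑ k ∈ Finset.range (n / 2 + 1), ∑ l ∈ Finset.range (n / 2 - k + 1),
          ((ascPochhammer ℝ (n - k)).eval lam * (ascPochhammer ℝ k).eval (lam - mu) *
              ((n : ℝ) + mu - 2 * k) /
            ((ascPochhammer ℝ (n - k + 1)).eval mu * (Nat.factorial k : ℝ))) *
            ((-1 : ℝ) ^ l * ((ascPochhammer ℝ (n - 2 * k - l)).eval mu /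
              ((Nat.factorial l : ℝ) * (Nat.factorial (n - 2 * k - 2 * l) : ℝ))) *
              (2 * x) ^ (n - 2 * k - 2 * l)) := by
        refine Finset.sum_congr rfl fun k hk => ?_
        have hk2 : k ≤ n / 2 := by
          have := Finset.mem_range.mp hk; omega
        rw [gegenbauerC, show (n - 2 * k) / 2 = n / 2 - k from by omega, Finset.mul_sum]
    _ = ∑ j ∈ Finset.range (n / 2 + 1), ∑ k ∈ Finset.range (j + 1),
          ((ascPochhammer ℝ (n - k)).eval lam * (ascPochhammer ℝ k).eval (lam - mu) *
              ((n : ℝ) + mu - 2 * k) /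
            ((ascPochhammer ℝ (n - k + 1)).eval mu * (Nat.factorial k : ℝ))) *
            ((-1 : ℝ) ^ (j - k) * ((ascPochhammer ℝ (n - 2 * k - (j - k))).eval mu /
              ((Nat.factorial (j - k) : ℝ) * (Nat.factorial (n - 2 * k - 2 * (j - k)) : ℝ))) *
              (2 * x) ^ (n - 2 * k - 2 * (j - k))) := triangle_sum (n / 2) _
    _ = gegenbauerC lam n x := by
        rw [gegenbauerC]
        refine Finset.sum_congr rfl fun j hj => ?_
        have hj2 : 2 * j ≤ n := by
          have := Finset.mem_range.mp hj; omega
        have inner : ∀ k ∈ Finset.range (j + 1),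
            ((ascPochhammer ℝ (n - k)).eval lam * (ascPochhammer ℝ k).eval (lam - mu) *
                ((n : ℝ) + mu - 2 * k) /
              ((ascPochhammer ℝ (n - k + 1)).eval mu * (Nat.factorial k : ℝ))) *
              ((-1 : ℝ) ^ (j - k) * ((ascPochhammer ℝ (n - 2 * k - (j - k))).eval mu /
                ((Nat.factorial (j - k) : ℝ) * (Nat.factorial (n - 2 * k - 2 * (j - k)) : ℝ))) *
                (2 * x) ^ (n - 2 * k - 2 * (j - k)))
            = ((-1 : ℝ) ^ j * (2 * x) ^ (n - 2 * j) / (Nat.factorial (n - 2 * j) : ℝ)) *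
                gegT lam mu n j k := by
          intro k hk
          have hk2 : k ≤ j := by
            have := Finset.mem_range.mp hk; omega
          rw [show n - 2 * k - (j - k) = n - k - j from by omega,
              show n - 2 * k - 2 * (j - k) = n - 2 * j from by omega]
          have hsgn : (-1 : ℝ) ^ (j - k) = (-1 : ℝ) ^ j * (-1 : ℝ) ^ k := by
            have h1 : (-1 : ℝ) ^ (j - k) * (-1 : ℝ) ^ k = (-1 : ℝ) ^ j := by
              rw [← pow_add]; congr 1; omega
            have h2 : ((-1 : ℝ) ^ k) * ((-1 : ℝ) ^ k) = 1 := by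
              rw [← pow_add, ← two_mul, pow_mul]; norm_num
            calc (-1 : ℝ) ^ (j - k)
                = (-1 : ℝ) ^ (j - k) * (((-1 : ℝ) ^ k) * ((-1 : ℝ) ^ k)) := by
                  rw [h2, mul_one]
              _ = ((-1 : ℝ) ^ (j - k) * (-1 : ℝ) ^ k) * (-1 : ℝ) ^ k := by ring
              _ = (-1 : ℝ) ^ j * (-1 : ℝ) ^ k := by rw [h1]
          rw [hsgn]
          unfold gegT pe
          ring
        rw [Finset.sum_congr rfl inner, ← Finset.mul_sum,
            gegKey lam mu hlam hmu j n hj2]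
        unfold pe
        ring
end
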